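/- Let n ≥ 1, r > 0, and for each k ∈ ℤ let h_k : ℝ^n → ℝ^n be a continuous map such that ‖h_k(z)‖ ≤ r whenever ‖z‖ ≤ r. Then there exists a sequence {z*_k : k ∈ ℤ} in ℝ^n with ‖z*_k‖ ≤ r and z*_{k+1} = h_k(z*_k) for all k ∈ ℤ. -/

import Mathlib

/-!
The orbits started at time `s` from a chosen `x ∈ K` and held constant before `s` all lie in
the compact product `K^ℤ` (Tychonoff), so they have a cluster point as `s → -∞`. For every `k`,
the orbits started before `k` satisfy the closed condition `z (k + 1) = f k (z k)`, hence so does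
the cluster point.
-/

open Filter Set

variable {X : Type*}

def forwardOrbit (f : ℤ → X → X) (s : ℤ) (x : X) : ℕ → X
  | 0 => x
  | j + 1 => f (s + j) (forwardOrbit f s x j)

/-- Indexed by absolute time; `Int.toNat` truncation makes it equal to `x` at all times `k ≤ s`. -/
def orbitFrom (f : ℤ → X → X) (s : ℤ) (x : X) (k : ℤ) : X :=
  forwardOrbit f s x (k - s).toNat

theorem orbitFrom_succ {f : ℤ → X → X} {s k : ℤ} (x : X) (hk : s ≤ k) :
    orbitFrom f s x (k + 1) = f k (orbitFrom f s x k) := by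
  have hsucc : (k + 1 - s).toNat = (k - s).toNat + 1 := by omega
  have htime : s + ((k - s).toNat : ℤ) = k := by omega
  rw [orbitFrom, hsucc, forwardOrbit, htime, orbitFrom]

theorem forwardOrbit_mem {f : ℤ → X → X} {K : Set X} (hf : ∀ k, MapsTo (f k) K K) (s : ℤ)
    {x : X} (hx : x ∈ K) : ∀ j, forwardOrbit f s x j ∈ K
  | 0 => hx
  | j + 1 => hf _ (forwardOrbit_mem hf s hx j)

theorem orbitFrom_mem {f : ℤ → X → X} {K : Set X} (hf : ∀ k, MapsTo (f k) K K) (s : ℤ)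
    {x : X} (hx : x ∈ K) (k : ℤ) : orbitFrom f s x k ∈ K :=
  forwardOrbit_mem hf s hx _

theorem isClosed_setOf_apply_succ_eq [TopologicalSpace X] [T2Space X] {f : ℤ → X → X} {k : ℤ}
    (hf : Continuous (f k)) : IsClosed {z : ℤ → X | z (k + 1) = f k (z k)} :=
  isClosed_eq (continuous_apply _) (hf.comp (continuous_apply k))

theorem exists_orbit_mem_of_isCompact_of_mapsTo [TopologicalSpace X] [T2Space X]
    {f : ℤ → X → X} {K : Set X} (hK : IsCompact K) (hne : K.Nonempty)
    (hcont : ∀ k, Continuous (f k)) (hmaps : ∀ k, MapsTo (f k) K K) :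
    ∃ z : ℤ → X, (∀ k, z k ∈ K) ∧ ∀ k, z (k + 1) = f k (z k) := by
  obtain ⟨x, hx⟩ := hne
  obtain ⟨z, hzK, hz⟩ := (isCompact_pi_infinite fun _ : ℤ => hK).exists_mapClusterPt
    (f := atBot) (u := fun s => orbitFrom f s x)
    (tendsto_principal.2 (Eventually.of_forall fun s => orbitFrom_mem hmaps s hx))
  refine ⟨z, hzK, fun k => (isClosed_setOf_apply_succ_eq (hcont k)).mem_of_mapClusterPt hz ?_⟩
  filter_upwards [eventually_le_atBot k] with s hs
  exact orbitFrom_succ x hs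

theorem exists_biinfinite_orbit_in_ball_general (n : ℕ) (r : ℝ) (hr : 0 < r)
    (h : ℤ → EuclideanSpace ℝ (Fin n) → EuclideanSpace ℝ (Fin n))
    (hcont : ∀ k : ℤ, Continuous (h k))
    (hball : ∀ k : ℤ, ∀ z : EuclideanSpace ℝ (Fin n), ‖z‖ ≤ r → ‖h k z‖ ≤ r) :
    ∃ z : ℤ → EuclideanSpace ℝ (Fin n),
      (∀ k : ℤ, ‖z k‖ ≤ r) ∧ ∀ k : ℤ, z (k + 1) = h k (z k) := by
  have hmaps : ∀ k, MapsTo (h k) (Metric.closedBall 0 r) (Metric.closedBall 0 r) := by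
    intro k z hz
    simpa only [mem_closedBall_zero_iff] using hball k z (mem_closedBall_zero_iff.1 hz)
  obtain ⟨z, hz, horbit⟩ := exists_orbit_mem_of_isCompact_of_mapsTo (isCompact_closedBall 0 r)
    (Metric.nonempty_closedBall.2 hr.le) hcont hmaps
  exact ⟨z, fun k => mem_closedBall_zero_iff.1 (hz k), horbit⟩

/-- for a ℤ-indexed family of continuous self-maps of ℝⁿ preserving the
closed ball of radius `r`, there is a bi-infinite orbit inside that ball. -/
theorem exists_biinfinite_orbit_in_ball (n : ℕ) (hn : 1 ≤ n) (r : ℝ) (hr : 0 < r)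
    (h : ℤ → EuclideanSpace ℝ (Fin n) → EuclideanSpace ℝ (Fin n))
    (hcont : ∀ k : ℤ, Continuous (h k))
    (hball : ∀ k : ℤ, ∀ z : EuclideanSpace ℝ (Fin n), ‖z‖ ≤ r → ‖h k z‖ ≤ r) :
    ∃ z : ℤ → EuclideanSpace ℝ (Fin n),
      (∀ k : ℤ, ‖z k‖ ≤ r) ∧ ∀ k : ℤ, z (k + 1) = h k (z k) :=
  exists_biinfinite_orbit_in_ball_general n r hr h hcont hball
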